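/- For every 0 ≤ r ≤ m, the ZMod 2-dimension of the recursive subproduct code D(r,m) with base code RM(r',m') equals Σ_{i=0}^{r} (m choose i) · k̄^i, where k̄ = Σ_{j=1}^{r'} (m' choose j) (that is, k̄ = dim RM(r',m') − 1). -/

import Mathlib

/-- Length-`(2^m')^μ` vectors, viewed as functions on `μ` blocks of `m'` binary variables. -/
abbrev Vsp (m' μ : ℕ) := (Fin μ → (Fin m' → ZMod 2)) → ZMod 2

/-- The Reed–Muller code `RM(r', m')` : span of monomials of degree at most `r'`. -/
def RMbase (r' m' : ℕ) : Submodule (ZMod 2) ((Fin m' → ZMod 2) → ZMod 2) :=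
  Submodule.span (ZMod 2)
    {c | ∃ S : Finset (Fin m'), S.card ≤ r' ∧ c = fun x => ∏ i ∈ S, x i}

/-- `(c ⊙ v)(x₁,…,x_μ,x_{μ+1}) = c(x₁,…,x_μ) · v(x_{μ+1})`. -/
def odot {m' μ : ℕ} (c : Vsp m' μ) (v : (Fin m' → ZMod 2) → ZMod 2) : Vsp m' (μ + 1) :=
  fun x => c (fun i => x i.castSucc) * v (x (Fin.last μ))

/-- The recursive subproduct code `D(r, μ)` with base code `RM(r', m')`. -/
def Dcode (r' m' : ℕ) : ℕ → (μ : ℕ) → Submodule (ZMod 2) (Vsp m' μ)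
  | _, 0 => Submodule.span (ZMod 2) {c : Vsp m' 0 | c = fun _ => 1}
  | 0, μ + 1 => Submodule.span (ZMod 2) {c : Vsp m' (μ + 1) | c = fun _ => 1}
  | _ + 1, 1 => Submodule.span (ZMod 2)
      {c : Vsp m' 1 | ∃ S : Finset (Fin m'), S.card ≤ r' ∧ c = fun x => ∏ i ∈ S, x 0 i}
  | r + 1, μ + 2 =>
    if r + 1 < μ + 2 then
      Submodule.span (ZMod 2)
        ({w | ∃ c ∈ Dcode r' m' (r + 1) (μ + 1), w = odot c (fun _ => 1)} ∪
         {w | ∃ c ∈ Dcode r' m' r (μ + 1), ∃ v ∈ RMbase r' m', w = odot c v})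
    else
      Submodule.span (ZMod 2)
        {w | ∃ c ∈ Dcode r' m' (μ + 1) (μ + 1), ∃ v ∈ RMbase r' m', w = odot c v}
  termination_by r μ => μ

/-- Monomial evaluation `mon_{S₁ ∪ ⋯ ∪ S_μ}` on the block-structured space;
a subset `S ⊆ Fin (μ·m')` is identified with a subset of `Fin μ × Fin m'`,
the first coordinate being the block index. -/
def monP {m' μ : ℕ} (S : Finset (Fin μ × Fin m')) : Vsp m' μ :=
  fun x => ∏ p ∈ S, x p.1 p.2

/-!
`D(r, μ)` is spanned by the block monomials `x ↦ ∏_b ∏_{i ∈ S_b} x_b i` with at most `r` nonempty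
blocks `S_b`, each of size at most `r'`: in the recursion, `c ⊙ 1` appends an empty block and
`c ⊙ mon_T` appends the block `T`. Distinct block monomials are linearly independent (evaluate at
indicator vectors and induct along inclusion), so the dimension counts these families: choose the
`i ≤ r` nonempty blocks in `m.choose i` ways and fill each with one of the `k̄` nonempty subsets of
size at most `r'`.
-/

open Finset

section BlockMonomial

variable {ι κ R : Type*} [Fintype ι]

def blockMonomial [CommMonoid R] (f : ι → Finset κ) : (ι → κ → R) → R :=
  fun x => ∏ b, ∏ i ∈ f b, x b i

lemma blockMonomial_empty [CommMonoid R] :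
    blockMonomial (fun _ : ι => (∅ : Finset κ)) = fun _ => (1 : R) := by
  funext x
  simp [blockMonomial]

lemma blockMonomial_apply_indicator [CommMonoidWithZero R] [DecidableEq κ] (f h : ι → Finset κ) :
    blockMonomial f (fun b i => if i ∈ h b then (1 : R) else 0) =
      if ∀ b, f b ⊆ h b then 1 else 0 := by
  simp [blockMonomial, prod_boole, subset_iff]

lemma linearIndependent_blockMonomial [CommRing R] [DecidableEq ι] [Fintype κ] :
    LinearIndependent R (blockMonomial : (ι → Finset κ) → (ι → κ → R) → R) := by
  classical
  rw [Fintype.linearIndependent_iff]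
  intro g hg h
  induction h using WellFoundedLT.induction with
  | _ h ih =>
  -- evaluating at the indicator of `h` only sees the families below `h`
  have hsum := congrFun hg (fun b i => if i ∈ h b then 1 else 0)
  simp only [Finset.sum_apply, Pi.smul_apply, smul_eq_mul, blockMonomial_apply_indicator,
    mul_ite, mul_one, mul_zero, Pi.zero_apply] at hsum
  rwa [sum_eq_single h
    (fun f _ hf => ite_eq_right_iff.2 fun hle => ih f (lt_of_le_of_ne (Pi.le_def.2 hle) hf))
    (by simp), if_pos fun _ => subset_rfl] at hsum

lemma finrank_span_image_blockMonomial [CommRing R] [Nontrivial R] [DecidableEq ι] [Fintype κ]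
    (A : Finset (ι → Finset κ)) :
    Module.finrank R (Submodule.span R
      ((blockMonomial : (ι → Finset κ) → (ι → κ → R) → R) '' A)) = #A := by
  rw [← Subtype.range_coe (s := (A : Set (ι → Finset κ))), ← Set.range_comp,
    finrank_span_eq_card (linearIndependent_blockMonomial.comp _ Subtype.val_injective)]
  simp

end BlockMonomial

lemma sum_powerset_filter_card_mem {β M : Type*} [AddCommMonoid M] (s : Finset β)
    (I : Finset ℕ) (g : ℕ → M) :
    ∑ T ∈ s.powerset with #T ∈ I, g #T = ∑ j ∈ I, (#s).choose j • g j := by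
  rw [← sum_fiberwise_of_maps_to (g := card) (t := I) fun T hT => (mem_filter.1 hT).2]
  refine sum_congr rfl fun j hj => ?_
  have hfiber : {T ∈ {T ∈ s.powerset | #T ∈ I} | #T = j} = powersetCard j s := by
    ext T
    simp only [mem_filter, mem_powerset, mem_powersetCard]
    constructor
    · exact fun h => ⟨h.1.1, h.2⟩
    · rintro ⟨hT, rfl⟩
      exact ⟨⟨hT, hj⟩, rfl⟩
  rw [hfiber, sum_congr rfl fun T hT => by rw [(mem_powersetCard.1 hT).2], sum_const,
    card_powersetCard]

lemma card_filter_nonempty_card_le {κ : Type*} [Fintype κ] (r' : ℕ) :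
    #{T : Finset κ | T.Nonempty ∧ #T ≤ r'} = ∑ j ∈ Icc 1 r', (Fintype.card κ).choose j := by
  have hfilter : ({T : Finset κ | T.Nonempty ∧ #T ≤ r'} : Finset (Finset κ)) =
      {T ∈ (univ : Finset κ).powerset | #T ∈ Icc 1 r'} := by
    ext T
    simp [← card_pos, Nat.one_le_iff_ne_zero, Nat.pos_iff_ne_zero]
  rw [hfilter, card_eq_sum_ones, sum_powerset_filter_card_mem univ _ fun _ => 1]
  simp

section AdmissibleFamilies

variable {ι κ : Type*} [Fintype ι] [DecidableEq ι] [Fintype κ]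

def blockSupport (f : ι → Finset κ) : Finset ι := {b | (f b).Nonempty}

def admissibleFamilies (r' r : ℕ) : Finset (ι → Finset κ) :=
  {f | #(blockSupport f) ≤ r ∧ ∀ b, #(f b) ≤ r'}

lemma mem_admissibleFamilies {r' r : ℕ} {f : ι → Finset κ} :
    f ∈ admissibleFamilies r' r ↔ #(blockSupport f) ≤ r ∧ ∀ b, #(f b) ≤ r' := by
  simp [admissibleFamilies]

lemma admissibleFamilies_zero (r' : ℕ) :
    (admissibleFamilies r' 0 : Finset (ι → Finset κ)) = {fun _ => ∅} := by
  ext f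
  simp only [mem_admissibleFamilies, nonpos_iff_eq_zero, card_eq_zero, blockSupport,
    filter_eq_empty_iff, mem_univ, not_nonempty_iff_eq_empty, true_implies, mem_singleton,
    funext_iff]
  exact and_iff_left_of_imp fun h b => by simp [@h b]

lemma mem_admissibleFamilies_of_card_le {r' r : ℕ} (h : Fintype.card ι ≤ r) {f : ι → Finset κ} :
    f ∈ admissibleFamilies r' r ↔ ∀ b, #(f b) ≤ r' := by
  rw [mem_admissibleFamilies, and_iff_right ((card_le_univ _).trans h)]

lemma card_admissibleFamilies_filter_blockSupport_eq [DecidableEq κ] {r' r : ℕ} {B : Finset ι}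
    (hB : #B ≤ r) :
    #{f ∈ (admissibleFamilies r' r : Finset (ι → Finset κ)) | blockSupport f = B} =
      #{T : Finset κ | T.Nonempty ∧ #T ≤ r'} ^ #B := by
  set N : Finset (Finset κ) := {T | T.Nonempty ∧ #T ≤ r'}
  have hpi : {f ∈ (admissibleFamilies r' r : Finset (ι → Finset κ)) | blockSupport f = B} =
      Fintype.piFinset fun b => if b ∈ B then N else {∅} := by
    ext f
    simp only [mem_filter, mem_admissibleFamilies, Fintype.mem_piFinset]
    constructor
    · rintro ⟨⟨-, hsize⟩, rfl⟩ b
      by_cases hb : (f b).Nonempty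
      · simp [blockSupport, hb, N, hsize b]
      · simp [blockSupport, not_nonempty_iff_eq_empty.1 hb]
    · intro hf
      have hsupp : blockSupport f = B := by
        ext b
        have hfb := hf b
        by_cases hb : b ∈ B <;> simp [hb, N] at hfb <;> simp [blockSupport, hb, hfb]
      refine ⟨⟨hsupp ▸ hB, fun b => ?_⟩, hsupp⟩
      have hfb := hf b
      by_cases hb : b ∈ B <;> simp [hb, N] at hfb <;> simp [hfb]
  rw [hpi, Fintype.card_piFinset]
  simp only [apply_ite card, card_singleton]
  rw [prod_ite_mem, univ_inter, prod_const]

theorem card_admissibleFamilies [DecidableEq κ] (r' r : ℕ) :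
    #(admissibleFamilies r' r : Finset (ι → Finset κ)) =
      ∑ i ∈ range (r + 1),
        (Fintype.card ι).choose i * (∑ j ∈ Icc 1 r', (Fintype.card κ).choose j) ^ i := by
  rw [card_eq_sum_card_fiberwise (f := blockSupport)
    (t := {B ∈ univ.powerset | #B ∈ range (r + 1)}) fun f hf => by
      simpa [Nat.lt_succ_iff] using (mem_admissibleFamilies.1 hf).1]
  rw [sum_congr rfl fun B hB => card_admissibleFamilies_filter_blockSupport_eq
    (Nat.lt_succ_iff.1 (mem_range.1 (mem_filter.1 hB).2)), sum_powerset_filter_card_mem,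
    card_filter_nonempty_card_le]
  simp

end AdmissibleFamilies

section Snoc

variable {κ : Type*} {μ : ℕ}

lemma card_blockSupport_snoc (f : Fin μ → Finset κ) (T : Finset κ) :
    #(blockSupport (Fin.snoc f T : Fin (μ + 1) → Finset κ)) =
      #(blockSupport f) + if T.Nonempty then 1 else 0 := by
  simp only [blockSupport, card_filter, Fin.sum_univ_castSucc, Fin.snoc_castSucc, Fin.snoc_last]

lemma exists_eq_snoc (g : Fin (μ + 1) → Finset κ) : ∃ f T, g = Fin.snoc f T :=
  ⟨Fin.init g, g (Fin.last μ), (Fin.snoc_init_self g).symm⟩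

variable [Fintype κ]

lemma snoc_mem_admissibleFamilies {r' r : ℕ} {f : Fin μ → Finset κ} {T : Finset κ} :
    (Fin.snoc f T : Fin (μ + 1) → Finset κ) ∈ admissibleFamilies r' r ↔
      #(blockSupport f) + (if T.Nonempty then 1 else 0) ≤ r ∧ (∀ b, #(f b) ≤ r') ∧ #T ≤ r' := by
  simp [mem_admissibleFamilies, card_blockSupport_snoc, Fin.forall_fin_succ']

lemma coe_admissibleFamilies_succ (r' s : ℕ) :
    (↑(admissibleFamilies r' (s + 1) : Finset (Fin (μ + 1) → Finset κ)) : Set _) =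
      (Fin.snoc · ∅) '' ↑(admissibleFamilies r' (s + 1) : Finset (Fin μ → Finset κ)) ∪
        Set.image2 (Fin.snoc (n := μ) (α := fun _ => Finset κ))
          ↑(admissibleFamilies r' s : Finset (Fin μ → Finset κ)) {T | #T ≤ r'} := by
  ext g
  obtain ⟨f, T, rfl⟩ := exists_eq_snoc g
  simp only [Set.mem_union, Set.mem_image, Set.mem_image2, mem_coe, Set.mem_ofPred_eq,
    Fin.snoc_inj, snoc_mem_admissibleFamilies]
  rcases T.eq_empty_or_nonempty with rfl | hT
  · simp +contextual [mem_admissibleFamilies, Nat.le_succ_of_le]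
  · simp [mem_admissibleFamilies, hT, hT.ne_empty.symm, and_assoc]

lemma coe_admissibleFamilies_of_le {r' r : ℕ} (h : μ + 1 ≤ r) :
    (↑(admissibleFamilies r' r : Finset (Fin (μ + 1) → Finset κ)) : Set _) =
      Set.image2 (Fin.snoc (n := μ) (α := fun _ => Finset κ))
        ↑(admissibleFamilies r' μ : Finset (Fin μ → Finset κ)) {T | #T ≤ r'} := by
  ext g
  obtain ⟨f, T, rfl⟩ := exists_eq_snoc g
  simp [mem_admissibleFamilies_of_card_le, h, Fin.forall_fin_succ', Fin.snoc_inj]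

end Snoc

section Code

open Submodule

variable {m' μ : ℕ}

def odotₗ (m' μ : ℕ) :
    Vsp m' μ →ₗ[ZMod 2] ((Fin m' → ZMod 2) → ZMod 2) →ₗ[ZMod 2] Vsp m' (μ + 1) :=
  (LinearMap.mul (ZMod 2) (Vsp m' (μ + 1))).compl₁₂ (LinearMap.funLeft _ _ Fin.init)
    (LinearMap.funLeft _ _ fun x => x (Fin.last μ))

lemma odotₗ_apply (c : Vsp m' μ) (v : (Fin m' → ZMod 2) → ZMod 2) : odotₗ m' μ c v = odot c v :=
  rfl

lemma span_setOf_odot (s : Set (Vsp m' μ)) (t : Set ((Fin m' → ZMod 2) → ZMod 2)) :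
    span (ZMod 2) {w | ∃ c ∈ span (ZMod 2) s, ∃ v ∈ span (ZMod 2) t, w = odot c v} =
      span (ZMod 2) (Set.image2 odot s t) := by
  have hset : {w | ∃ c ∈ span (ZMod 2) s, ∃ v ∈ span (ZMod 2) t, w = odot c v} =
      Set.image2 (fun c v => odotₗ m' μ c v) (span (ZMod 2) s) (span (ZMod 2) t) := by
    ext w
    simp [Set.mem_image2, odotₗ_apply, eq_comm]
  rw [hset, ← map₂_eq_span_image2, map₂_span_span]
  rfl

lemma span_setOf_odot_one (s : Set (Vsp m' μ)) :
    span (ZMod 2) {w | ∃ c ∈ span (ZMod 2) s, w = odot c fun _ => 1} =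
      span (ZMod 2) ((odot · fun _ => 1) '' s) := by
  have hset : {w | ∃ c ∈ span (ZMod 2) s, w = odot c fun _ => 1} =
      (odotₗ m' μ).flip (fun _ => 1) '' span (ZMod 2) s := by
    ext w
    simp [odotₗ_apply, eq_comm]
  rw [hset, span_image, span_eq, ← span_image]
  rfl

lemma odot_blockMonomial (f : Fin μ → Finset (Fin m')) (T : Finset (Fin m')) :
    odot (blockMonomial f) (fun x => ∏ i ∈ T, x i) = blockMonomial (Fin.snoc f T) := by
  funext x
  simp only [odot, blockMonomial, Fin.prod_univ_castSucc, Fin.snoc_castSucc, Fin.snoc_last]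

lemma image_odot_one_image_blockMonomial (A : Set (Fin μ → Finset (Fin m'))) :
    (odot · fun _ => 1) '' (blockMonomial '' A) = blockMonomial '' ((Fin.snoc · ∅) '' A) := by
  simp only [Set.image_image, ← odot_blockMonomial, prod_empty]

lemma image2_odot_image_blockMonomial (A : Set (Fin μ → Finset (Fin m')))
    (𝒯 : Set (Finset (Fin m'))) :
    Set.image2 odot (blockMonomial '' A) ((fun T x => ∏ i ∈ T, x i) '' 𝒯) =
      blockMonomial '' Set.image2 (Fin.snoc (α := fun _ => Finset (Fin m'))) A 𝒯 := by
  simp only [Set.image2_image_left, Set.image2_image_right, Set.image_image2, odot_blockMonomial]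

lemma RMbase_eq_span_image (r' m' : ℕ) :
    RMbase r' m' = span (ZMod 2) ((fun T x => ∏ i ∈ T, x i) '' {T : Finset (Fin m') | #T ≤ r'}) := by
  rw [RMbase]
  congr 1
  ext c
  simp [eq_comm]

theorem Dcode_eq_span (r' m' r μ : ℕ) :
    Dcode r' m' r μ = span (ZMod 2)
      (blockMonomial '' ↑(admissibleFamilies r' r : Finset (Fin μ → Finset (Fin m')))) := by
  induction r, μ using Dcode.induct with
  | case1 r =>
    have hzero : (admissibleFamilies r' r : Finset (Fin 0 → Finset (Fin m'))) = {fun _ => ∅} :=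
      eq_singleton_iff_unique_mem.2
        ⟨(mem_admissibleFamilies_of_card_le (by simp)).2 (by simp), fun _ _ => Subsingleton.elim _ _⟩
    rw [Dcode, hzero, coe_singleton, Set.image_singleton, blockMonomial_empty]
    rfl
  | case2 μ =>
    rw [Dcode, admissibleFamilies_zero, coe_singleton, Set.image_singleton, blockMonomial_empty]
    rfl
  | case3 r =>
    rw [Dcode]
    congr 1
    ext c
    simp only [Set.mem_ofPred_eq, Set.mem_image, mem_coe,
      mem_admissibleFamilies_of_card_le (show Fintype.card (Fin 1) ≤ r + 1 by simp)]
    constructor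
    · rintro ⟨S, hS, rfl⟩
      exact ⟨fun _ => S, fun _ => hS, funext fun x => by simp [blockMonomial]⟩
    · rintro ⟨f, hf, rfl⟩
      exact ⟨f 0, hf 0, funext fun x => by simp [blockMonomial]⟩
  | case4 r μ hlt ih₁ ih₀ =>
    rw [Dcode, if_pos hlt, ih₁, ih₀, RMbase_eq_span_image, span_union, span_setOf_odot_one,
      span_setOf_odot, ← span_union, coe_admissibleFamilies_succ (μ := μ + 1), Set.image_union,
      image_odot_one_image_blockMonomial, image2_odot_image_blockMonomial]
  | case5 r μ hge ih =>
    rw [Dcode, if_neg hge, ih, RMbase_eq_span_image, span_setOf_odot,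
      coe_admissibleFamilies_of_le (μ := μ + 1) (by omega), image2_odot_image_blockMonomial]

end Code

theorem stmt_18_general (m m' r' : ℕ) (r : ℕ) :
    Module.finrank (ZMod 2) (Dcode r' m' r m) =
      ∑ i ∈ Finset.range (r + 1),
        m.choose i * (∑ j ∈ Finset.Icc 1 r', m'.choose j) ^ i := by
  rw [Dcode_eq_span, finrank_span_image_blockMonomial, card_admissibleFamilies]
  simp

/-- for `0 ≤ r ≤ m`, the dimension of `D(r,m)` with base code `RM(r',m')`
equals `Σ_{i=0}^{r} (m choose i) · k̄^i` where `k̄ = Σ_{j=1}^{r'} (m' choose j)`. -/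
theorem stmt_18 (m m' r' : ℕ) (hm : 1 ≤ m) (hm' : 1 ≤ m') (hr'1 : 1 ≤ r') (hr'2 : r' ≤ m')
    (r : ℕ) (hr : r ≤ m) :
    Module.finrank (ZMod 2) (Dcode r' m' r m) =
      ∑ i ∈ Finset.range (r + 1),
        m.choose i * (∑ j ∈ Finset.Icc 1 r', m'.choose j) ^ i :=
  stmt_18_general m m' r' r
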